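/- The restriction of Ψ to 𝕊 × (0,∞) × ℝ is a bijection onto D. Its inverse sends v ∈ D to (w, r, q), where w_i := v_i/‖v‖₊ for i ∈ P and w_i := v_i/‖v‖₋ for i ∈ N, r := √(‖v‖₊·‖v‖₋), and q := (‖v‖₊² − ‖v‖₋²)/2. Moreover, for every w ∈ 𝕊, r > 0 and q ∈ ℝ one has ‖Ψ(w,r,q)‖₊² = √(r⁴+q²) + q and ‖Ψ(w,r,q)‖₋² = √(r⁴+q²) − q; in particular ‖Ψ(w,r,q)‖₊² − ‖Ψ(w,r,q)‖₋² = 2q and ‖Ψ(w,r,q)‖₊·‖Ψ(w,r,q)‖₋ = r². Furthermore Ψ is C^∞ on ℂⁿ × (0,∞) × ℝ, and each component function of the inverse (the formulas for w, r, q above) is C^∞ on D. -/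

import Mathlib

open Finset

/-- `‖w‖₊² := Σ_{i : k i > 0} k(i)·|w_i|²`. -/
noncomputable def normPlusSq (n : ℕ) (k : Fin n → ℤ) (w : Fin n → ℂ) : ℝ :=
  ∑ i ∈ univ.filter (fun i => 0 < k i), (k i : ℝ) * ‖w i‖ ^ 2

/-- `‖w‖₋² := Σ_{i : k i < 0} (−k(i))·|w_i|²`. -/
noncomputable def normMinusSq (n : ℕ) (k : Fin n → ℤ) (w : Fin n → ℂ) : ℝ :=
  ∑ i ∈ univ.filter (fun i => k i < 0), (-(k i) : ℝ) * ‖w i‖ ^ 2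

/-- `‖w‖₊`. -/
noncomputable def normPlus (n : ℕ) (k : Fin n → ℤ) (w : Fin n → ℂ) : ℝ :=
  Real.sqrt (normPlusSq n k w)

/-- `‖w‖₋`. -/
noncomputable def normMinus (n : ℕ) (k : Fin n → ℤ) (w : Fin n → ℂ) : ℝ :=
  Real.sqrt (normMinusSq n k w)

/-- The bi-ellipsoid `𝕊 := {w : ‖w‖₊ = 1 ∧ ‖w‖₋ = 1}`. -/
def biEllipsoid (n : ℕ) (k : Fin n → ℤ) : Set (Fin n → ℂ) :=
  {w | normPlus n k w = 1 ∧ normMinus n k w = 1}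

/-- `D := {w : (w_i)_{i∈P} ≠ 0 and (w_i)_{i∈N} ≠ 0}`. -/
def domD (n : ℕ) (k : Fin n → ℤ) : Set (Fin n → ℂ) :=
  {w | (∃ i, 0 < k i ∧ w i ≠ 0) ∧ (∃ i, k i < 0 ∧ w i ≠ 0)}

/-- `g⁺(r,q) := √(√(r⁴+q²) + q)`. -/
noncomputable def gPlus (r q : ℝ) : ℝ := Real.sqrt (Real.sqrt (r ^ 4 + q ^ 2) + q)

/-- `g⁻(r,q) := √(√(r⁴+q²) − q)`. -/
noncomputable def gMinus (r q : ℝ) : ℝ := Real.sqrt (Real.sqrt (r ^ 4 + q ^ 2) - q)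

/-- The bi-spherical coordinate map `Ψ`. -/
noncomputable def PsiMap (n : ℕ) (k : Fin n → ℤ) (p : (Fin n → ℂ) × ℝ × ℝ) : Fin n → ℂ :=
  fun i => if 0 < k i then (gPlus p.2.1 p.2.2 : ℂ) * p.1 i else (gMinus p.2.1 p.2.2 : ℂ) * p.1 i

/-- First component of the inverse: `w_i = v_i/‖v‖₊` for `i ∈ P`, `v_i/‖v‖₋` for `i ∈ N`. -/
noncomputable def invW (n : ℕ) (k : Fin n → ℤ) (v : Fin n → ℂ) : Fin n → ℂ :=
  fun i => if 0 < k i then v i / (normPlus n k v : ℂ) else v i / (normMinus n k v : ℂ)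

/-- Second component of the inverse: `r = √(‖v‖₊·‖v‖₋)`. -/
noncomputable def invR (n : ℕ) (k : Fin n → ℤ) (v : Fin n → ℂ) : ℝ :=
  Real.sqrt (normPlus n k v * normMinus n k v)

/-- Third component of the inverse: `q = (‖v‖₊² − ‖v‖₋²)/2`. -/
noncomputable def invQ (n : ℕ) (k : Fin n → ℤ) (v : Fin n → ℂ) : ℝ :=
  (normPlusSq n k v - normMinusSq n k v) / 2


section Aux
variable (n : ℕ) (k : Fin n → ℤ)

lemma normPlusSq_nonneg (w : Fin n → ℂ) : 0 ≤ normPlusSq n k w :=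
  Finset.sum_nonneg fun i hi => mul_nonneg
    (by exact_mod_cast (Finset.mem_filter.1 hi).2.le) (by positivity)

lemma normMinusSq_nonneg (w : Fin n → ℂ) : 0 ≤ normMinusSq n k w :=
  Finset.sum_nonneg fun i hi => mul_nonneg
    (by
      have h2 : (k i : ℝ) < 0 := by exact_mod_cast (Finset.mem_filter.1 hi).2
      linarith)
    (by positivity)

lemma normPlusSq_psi (w : Fin n → ℂ) (r q : ℝ) :
    normPlusSq n k (PsiMap n k (w, r, q)) = gPlus r q ^ 2 * normPlusSq n k w := by
  unfold normPlusSq PsiMap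
  rw [Finset.mul_sum]
  refine Finset.sum_congr rfl fun i hi => ?_
  have hi' := (Finset.mem_filter.1 hi).2
  rw [if_pos hi', norm_mul, Complex.norm_real, Real.norm_eq_abs, mul_pow, sq_abs]
  ring

lemma normMinusSq_psi (w : Fin n → ℂ) (r q : ℝ) :
    normMinusSq n k (PsiMap n k (w, r, q)) = gMinus r q ^ 2 * normMinusSq n k w := by
  unfold normMinusSq PsiMap
  rw [Finset.mul_sum]
  refine Finset.sum_congr rfl fun i hi => ?_
  have hi' := (Finset.mem_filter.1 hi).2
  rw [if_neg (by omega), norm_mul, Complex.norm_real, Real.norm_eq_abs, mul_pow, sq_abs]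
  ring

lemma normPlusSq_invW (v : Fin n → ℂ) :
    normPlusSq n k (invW n k v) = normPlusSq n k v / (normPlus n k v) ^ 2 := by
  unfold normPlusSq invW
  rw [Finset.sum_div]
  refine Finset.sum_congr rfl fun i hi => ?_
  have hi' := (Finset.mem_filter.1 hi).2
  rw [if_pos hi', norm_div, Complex.norm_real, Real.norm_eq_abs, div_pow, sq_abs, mul_div_assoc]

lemma normMinusSq_invW (v : Fin n → ℂ) :
    normMinusSq n k (invW n k v) = normMinusSq n k v / (normMinus n k v) ^ 2 := by
  unfold normMinusSq invW
  rw [Finset.sum_div]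
  refine Finset.sum_congr rfl fun i hi => ?_
  have hi' := (Finset.mem_filter.1 hi).2
  rw [if_neg (by omega), norm_div, Complex.norm_real, Real.norm_eq_abs, div_pow, sq_abs, mul_div_assoc]

lemma exists_P (w : Fin n → ℂ) (h : normPlusSq n k w ≠ 0) : ∃ i, 0 < k i ∧ w i ≠ 0 := by
  by_contra hc
  push_neg at hc
  apply h
  refine Finset.sum_eq_zero fun i hi => ?_
  rw [hc i (Finset.mem_filter.1 hi).2]
  simp

lemma exists_N (w : Fin n → ℂ) (h : normMinusSq n k w ≠ 0) : ∃ i, k i < 0 ∧ w i ≠ 0 := by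
  by_contra hc
  push_neg at hc
  apply h
  refine Finset.sum_eq_zero fun i hi => ?_
  rw [hc i (Finset.mem_filter.1 hi).2]
  simp

end Aux

lemma abs_lt_sqrt {r q : ℝ} (hr : 0 < r) : |q| < Real.sqrt (r ^ 4 + q ^ 2) := by
  have h : q ^ 2 < r ^ 4 + q ^ 2 := by nlinarith [pow_pos hr 4]
  calc |q| = Real.sqrt (q ^ 2) := (Real.sqrt_sq_eq_abs q).symm
    _ < _ := Real.sqrt_lt_sqrt (sq_nonneg q) h

lemma hplus {r q : ℝ} (hr : 0 < r) : 0 < Real.sqrt (r ^ 4 + q ^ 2) + q := by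
  have := abs_lt_sqrt (q := q) hr; linarith [neg_abs_le q]

lemma hminus {r q : ℝ} (hr : 0 < r) : 0 < Real.sqrt (r ^ 4 + q ^ 2) - q := by
  have := abs_lt_sqrt (q := q) hr; linarith [le_abs_self q]

lemma gPlus_sq {r q : ℝ} (hr : 0 < r) : gPlus r q ^ 2 = Real.sqrt (r ^ 4 + q ^ 2) + q :=
  Real.sq_sqrt (hplus hr).le

lemma gMinus_sq {r q : ℝ} (hr : 0 < r) : gMinus r q ^ 2 = Real.sqrt (r ^ 4 + q ^ 2) - q :=
  Real.sq_sqrt (hminus hr).le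

lemma gPlus_pos {r q : ℝ} (hr : 0 < r) : 0 < gPlus r q := Real.sqrt_pos.2 (hplus hr)
lemma gMinus_pos {r q : ℝ} (hr : 0 < r) : 0 < gMinus r q := Real.sqrt_pos.2 (hminus hr)

lemma contDiffAt_gPlus {r q : ℝ} (hr : 0 < r) :
    ContDiffAt ℝ (⊤ : ℕ∞) (fun p : ℝ × ℝ => gPlus p.1 p.2) (r, q) := by
  have h1 : ContDiffAt ℝ (⊤ : ℕ∞) (fun p : ℝ × ℝ => p.1 ^ 4 + p.2 ^ 2) (r, q) :=
    ((contDiff_fst.pow 4).add (contDiff_snd.pow 2)).contDiffAt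
  have h2 : ContDiffAt ℝ (⊤ : ℕ∞) (fun p : ℝ × ℝ => Real.sqrt (p.1 ^ 4 + p.2 ^ 2)) (r, q) :=
    (Real.contDiffAt_sqrt (by positivity)).comp _ h1
  have h3 : ContDiffAt ℝ (⊤ : ℕ∞) (fun p : ℝ × ℝ => Real.sqrt (p.1 ^ 4 + p.2 ^ 2) + p.2) (r, q) :=
    h2.add contDiff_snd.contDiffAt
  exact (Real.contDiffAt_sqrt (hplus hr).ne').comp (r, q) h3

lemma contDiffAt_gMinus {r q : ℝ} (hr : 0 < r) :
    ContDiffAt ℝ (⊤ : ℕ∞) (fun p : ℝ × ℝ => gMinus p.1 p.2) (r, q) := by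
  have h1 : ContDiffAt ℝ (⊤ : ℕ∞) (fun p : ℝ × ℝ => p.1 ^ 4 + p.2 ^ 2) (r, q) :=
    ((contDiff_fst.pow 4).add (contDiff_snd.pow 2)).contDiffAt
  have h2 : ContDiffAt ℝ (⊤ : ℕ∞) (fun p : ℝ × ℝ => Real.sqrt (p.1 ^ 4 + p.2 ^ 2)) (r, q) :=
    (Real.contDiffAt_sqrt (by positivity)).comp _ h1
  have h3 : ContDiffAt ℝ (⊤ : ℕ∞) (fun p : ℝ × ℝ => Real.sqrt (p.1 ^ 4 + p.2 ^ 2) - p.2) (r, q) :=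
    h2.sub contDiff_snd.contDiffAt
  exact (Real.contDiffAt_sqrt (hminus hr).ne').comp (r, q) h3

lemma contDiff_normPlusSq (n : ℕ) (k : Fin n → ℤ) : ContDiff ℝ (⊤ : ℕ∞) (normPlusSq n k) := by
  unfold normPlusSq
  exact ContDiff.sum fun i _ => contDiff_const.mul ((contDiff_norm_sq ℝ).comp (contDiff_apply ℝ ℂ i))

lemma contDiff_normMinusSq (n : ℕ) (k : Fin n → ℤ) : ContDiff ℝ (⊤ : ℕ∞) (normMinusSq n k) := by
  unfold normMinusSq
  exact ContDiff.sum fun i _ => contDiff_const.mul ((contDiff_norm_sq ℝ).comp (contDiff_apply ℝ ℂ i))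
/-- `Ψ` restricts to a bijection of `𝕊 × (0,∞) × ℝ` onto `D` with the
explicit smooth inverse `v ↦ (invW v, invR v, invQ v)`, together with the norm
identities `‖Ψ(w,r,q)‖₊² = √(r⁴+q²)+q`, `‖Ψ(w,r,q)‖₋² = √(r⁴+q²)−q`,
`‖Ψ‖₊²−‖Ψ‖₋² = 2q`, `‖Ψ‖₊·‖Ψ‖₋ = r²`, and smoothness of `Ψ`. -/
theorem bispherical_coordinates_bijection
    (n : ℕ) (hn : 1 ≤ n) (k : Fin n → ℤ) (hk : ∀ i, k i ≠ 0)
    (hP : ∃ i, 0 < k i) (hN : ∃ i, k i < 0) :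
    (∀ w ∈ biEllipsoid n k, ∀ r q : ℝ, 0 < r →
      PsiMap n k (w, r, q) ∈ domD n k ∧
      normPlusSq n k (PsiMap n k (w, r, q)) = Real.sqrt (r ^ 4 + q ^ 2) + q ∧
      normMinusSq n k (PsiMap n k (w, r, q)) = Real.sqrt (r ^ 4 + q ^ 2) - q ∧
      normPlusSq n k (PsiMap n k (w, r, q)) - normMinusSq n k (PsiMap n k (w, r, q)) = 2 * q ∧
      normPlus n k (PsiMap n k (w, r, q)) * normMinus n k (PsiMap n k (w, r, q)) = r ^ 2 ∧
      invW n k (PsiMap n k (w, r, q)) = w ∧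
      invR n k (PsiMap n k (w, r, q)) = r ∧
      invQ n k (PsiMap n k (w, r, q)) = q) ∧
    (∀ v ∈ domD n k,
      invW n k v ∈ biEllipsoid n k ∧ 0 < invR n k v ∧
      PsiMap n k (invW n k v, invR n k v, invQ n k v) = v) ∧
    ContDiffOn ℝ (⊤ : ℕ∞) (PsiMap n k) {p : (Fin n → ℂ) × ℝ × ℝ | 0 < p.2.1} ∧
    ContDiffOn ℝ (⊤ : ℕ∞) (invW n k) (domD n k) ∧
    ContDiffOn ℝ (⊤ : ℕ∞) (invR n k) (domD n k) ∧
    ContDiffOn ℝ (⊤ : ℕ∞) (invQ n k) (domD n k) := by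
  refine ⟨?_, ?_, ?_, ?_, ?_, ?_⟩
  · -- forward direction
    rintro w ⟨hw1, hw2⟩ r q hr
    have hA : normPlusSq n k w = 1 := by
      have := hw1
      unfold normPlus at this
      nlinarith [Real.sq_sqrt (normPlusSq_nonneg n k w)]
    have hB : normMinusSq n k w = 1 := by
      have := hw2
      unfold normMinus at this
      nlinarith [Real.sq_sqrt (normMinusSq_nonneg n k w)]
    have hS : (0:ℝ) ≤ r ^ 4 + q ^ 2 := by positivity
    have hps : normPlusSq n k (PsiMap n k (w, r, q)) = Real.sqrt (r ^ 4 + q ^ 2) + q := by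
      rw [normPlusSq_psi, hA, mul_one, gPlus_sq hr]
    have hms : normMinusSq n k (PsiMap n k (w, r, q)) = Real.sqrt (r ^ 4 + q ^ 2) - q := by
      rw [normMinusSq_psi, hB, mul_one, gMinus_sq hr]
    have hnp : normPlus n k (PsiMap n k (w, r, q)) = gPlus r q := by
      unfold normPlus
      rw [normPlusSq_psi, hA, mul_one]
      exact Real.sqrt_sq (Real.sqrt_nonneg _)
    have hnm : normMinus n k (PsiMap n k (w, r, q)) = gMinus r q := by
      unfold normMinus
      rw [normMinusSq_psi, hB, mul_one]
      exact Real.sqrt_sq (Real.sqrt_nonneg _)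
    have hgp := gPlus_pos (q := q) hr
    have hgm := gMinus_pos (q := q) hr
    have hprod : normPlus n k (PsiMap n k (w, r, q)) * normMinus n k (PsiMap n k (w, r, q))
        = r ^ 2 := by
      rw [hnp, hnm]
      unfold gPlus gMinus
      rw [← Real.sqrt_mul (hplus hr).le]
      have h1 : (Real.sqrt (r ^ 4 + q ^ 2) + q) * (Real.sqrt (r ^ 4 + q ^ 2) - q) = r ^ 4 := by
        nlinarith [Real.sq_sqrt hS]
      rw [h1, show r ^ 4 = (r ^ 2) ^ 2 by ring, Real.sqrt_sq (sq_nonneg r)]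
    refine ⟨?_, hps, hms, by rw [hps, hms]; ring, hprod, ?_, ?_, ?_⟩
    · obtain ⟨i, hi, hwi⟩ := exists_P n k w (by rw [hA]; norm_num)
      obtain ⟨j, hj, hwj⟩ := exists_N n k w (by rw [hB]; norm_num)
      constructor
      · exact ⟨i, hi, by
          show (if 0 < k i then (gPlus r q : ℂ) * w i else (gMinus r q : ℂ) * w i) ≠ 0
          rw [if_pos hi]
          exact mul_ne_zero (Complex.ofReal_ne_zero.2 hgp.ne') hwi⟩
      · exact ⟨j, hj, by
          show (if 0 < k j then (gPlus r q : ℂ) * w j else (gMinus r q : ℂ) * w j) ≠ 0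
          rw [if_neg (by omega)]
          exact mul_ne_zero (Complex.ofReal_ne_zero.2 hgm.ne') hwj⟩
    · funext i
      unfold invW
      by_cases hi : 0 < k i
      · rw [if_pos hi, hnp]
        show (if 0 < k i then (gPlus r q : ℂ) * w i else (gMinus r q : ℂ) * w i)
            / (gPlus r q : ℂ) = w i
        rw [if_pos hi]
        exact mul_div_cancel_left₀ _ (Complex.ofReal_ne_zero.2 hgp.ne')
      · rw [if_neg hi, hnm]
        show (if 0 < k i then (gPlus r q : ℂ) * w i else (gMinus r q : ℂ) * w i)
            / (gMinus r q : ℂ) = w i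
        rw [if_neg hi]
        exact mul_div_cancel_left₀ _ (Complex.ofReal_ne_zero.2 hgm.ne')
    · unfold invR
      rw [hprod, Real.sqrt_sq hr.le]
    · unfold invQ
      rw [hps, hms]
      ring
  · -- inverse direction
    rintro v ⟨⟨i, hiP, hvi⟩, ⟨j, hjN, hvj⟩⟩
    have hA : 0 < normPlusSq n k v := by
      refine Finset.sum_pos' (fun l hl => mul_nonneg
        (by exact_mod_cast (Finset.mem_filter.1 hl).2.le) (by positivity)) ?_
      refine ⟨i, Finset.mem_filter.2 ⟨Finset.mem_univ i, hiP⟩, ?_⟩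
      exact mul_pos (by exact_mod_cast hiP) (pow_pos (norm_pos_iff.2 hvi) 2)
    have hB : 0 < normMinusSq n k v := by
      refine Finset.sum_pos' (fun l hl => mul_nonneg ?_ (by positivity)) ?_
      · have h2 : ((k l : ℝ)) < 0 := by exact_mod_cast (Finset.mem_filter.1 hl).2
        linarith
      refine ⟨j, Finset.mem_filter.2 ⟨Finset.mem_univ j, hjN⟩, ?_⟩
      have h2 : ((k j : ℝ)) < 0 := by exact_mod_cast hjN
      exact mul_pos (by linarith) (pow_pos (norm_pos_iff.2 hvj) 2)
    have ha : 0 < normPlus n k v := Real.sqrt_pos.2 hA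
    have hb : 0 < normMinus n k v := Real.sqrt_pos.2 hB
    have hap : (normPlus n k v) ^ 2 = normPlusSq n k v := Real.sq_sqrt hA.le
    have hbp : (normMinus n k v) ^ 2 = normMinusSq n k v := Real.sq_sqrt hB.le
    have hkey : Real.sqrt (invR n k v ^ 4 + invQ n k v ^ 2)
        = (normPlusSq n k v + normMinusSq n k v) / 2 := by
      have h1 : invR n k v ^ 4 + invQ n k v ^ 2
          = ((normPlusSq n k v + normMinusSq n k v) / 2) ^ 2 := by
        unfold invR invQ
        have h2 : Real.sqrt (normPlus n k v * normMinus n k v) ^ 4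
            = normPlusSq n k v * normMinusSq n k v := by
          rw [show ∀ x : ℝ, x ^ 4 = (x ^ 2) ^ 2 from fun x => by ring,
            Real.sq_sqrt (mul_pos ha hb).le, mul_pow, hap, hbp]
        rw [h2]; ring
      rw [h1, Real.sqrt_sq (by positivity)]
    have hgp : gPlus (invR n k v) (invQ n k v) = normPlus n k v := by
      unfold gPlus
      rw [hkey]
      unfold invQ normPlus
      congr 1
      ring
    have hgm : gMinus (invR n k v) (invQ n k v) = normMinus n k v := by
      unfold gMinus
      rw [hkey]
      unfold invQ normMinus
      congr 1
      ring
    refine ⟨⟨?_, ?_⟩, Real.sqrt_pos.2 (mul_pos ha hb), ?_⟩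
    · unfold normPlus
      rw [normPlusSq_invW, hap, div_self hA.ne']
      exact Real.sqrt_one
    · unfold normMinus
      rw [normMinusSq_invW, hbp, div_self hB.ne']
      exact Real.sqrt_one
    · funext i'
      show (if 0 < k i' then (gPlus (invR n k v) (invQ n k v) : ℂ) * invW n k v i'
        else (gMinus (invR n k v) (invQ n k v) : ℂ) * invW n k v i') = v i'
      unfold invW
      by_cases hi' : 0 < k i'
      · rw [if_pos hi', if_pos hi', hgp]
        exact mul_div_cancel₀ _ (Complex.ofReal_ne_zero.2 ha.ne')
      · rw [if_neg hi', if_neg hi', hgm]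
        exact mul_div_cancel₀ _ (Complex.ofReal_ne_zero.2 hb.ne')
  · -- smoothness of PsiMap
    intro p hp
    refine ContDiffAt.contDiffWithinAt ?_
    have hr : 0 < p.2.1 := hp
    refine contDiffAt_pi.2 fun i => ?_
    have hgP : ContDiffAt ℝ (⊤ : ℕ∞) (fun p : (Fin n → ℂ) × ℝ × ℝ => gPlus p.2.1 p.2.2) p :=
      by
        have h := ContDiffAt.comp (g := fun x : ℝ × ℝ => gPlus x.1 x.2)
          (f := fun p : (Fin n → ℂ) × ℝ × ℝ => p.2) p (contDiffAt_gPlus hr) contDiffAt_snd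
        exact h
    have hgM : ContDiffAt ℝ (⊤ : ℕ∞) (fun p : (Fin n → ℂ) × ℝ × ℝ => gMinus p.2.1 p.2.2) p :=
      by
        have h := ContDiffAt.comp (g := fun x : ℝ × ℝ => gMinus x.1 x.2)
          (f := fun p : (Fin n → ℂ) × ℝ × ℝ => p.2) p (contDiffAt_gMinus hr) contDiffAt_snd
        exact h
    have happ : ContDiffAt ℝ (⊤ : ℕ∞) (fun p : (Fin n → ℂ) × ℝ × ℝ => p.1 i) p :=
      ((contDiff_apply ℝ ℂ i).comp contDiff_fst).contDiffAt
    unfold PsiMap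
    by_cases hi : 0 < k i
    · simp only [if_pos hi]
      exact ((Complex.ofRealCLM.contDiff.contDiffAt).comp p hgP).mul happ
    · simp only [if_neg hi]
      exact ((Complex.ofRealCLM.contDiff.contDiffAt).comp p hgM).mul happ
  · -- smoothness of invW
    rintro v ⟨⟨i, hiP, hvi⟩, ⟨j, hjN, hvj⟩⟩
    refine ContDiffAt.contDiffWithinAt ?_
    have hA : 0 < normPlusSq n k v := by
      refine Finset.sum_pos' (fun l hl => mul_nonneg
        (by exact_mod_cast (Finset.mem_filter.1 hl).2.le) (by positivity)) ?_
      exact ⟨i, Finset.mem_filter.2 ⟨Finset.mem_univ i, hiP⟩,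
        mul_pos (by exact_mod_cast hiP) (pow_pos (norm_pos_iff.2 hvi) 2)⟩
    have hB : 0 < normMinusSq n k v := by
      refine Finset.sum_pos' (fun l hl => mul_nonneg ?_ (by positivity)) ?_
      · have h2 : ((k l : ℝ)) < 0 := by exact_mod_cast (Finset.mem_filter.1 hl).2
        linarith
      refine ⟨j, Finset.mem_filter.2 ⟨Finset.mem_univ j, hjN⟩, ?_⟩
      have h2 : ((k j : ℝ)) < 0 := by exact_mod_cast hjN
      exact mul_pos (by linarith) (pow_pos (norm_pos_iff.2 hvj) 2)
    have hnp : ContDiffAt ℝ (⊤ : ℕ∞) (normPlus n k) v :=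
      (Real.contDiffAt_sqrt hA.ne').comp v (contDiff_normPlusSq n k).contDiffAt
    have hnm : ContDiffAt ℝ (⊤ : ℕ∞) (normMinus n k) v :=
      (Real.contDiffAt_sqrt hB.ne').comp v (contDiff_normMinusSq n k).contDiffAt
    have ha : 0 < normPlus n k v := Real.sqrt_pos.2 hA
    have hb : 0 < normMinus n k v := Real.sqrt_pos.2 hB
    refine contDiffAt_pi.2 fun i' => ?_
    unfold invW
    have happ : ContDiffAt ℝ (⊤ : ℕ∞) (fun v : Fin n → ℂ => v i') v :=
      (contDiff_apply ℝ ℂ i').contDiffAt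
    by_cases hi' : 0 < k i'
    · simp only [if_pos hi', div_eq_mul_inv]
      refine happ.mul ((contDiffAt_inv ℝ ?_).comp v
        ((Complex.ofRealCLM.contDiff.contDiffAt).comp v hnp))
      exact Complex.ofReal_ne_zero.2 ha.ne'
    · simp only [if_neg hi', div_eq_mul_inv]
      refine happ.mul ((contDiffAt_inv ℝ ?_).comp v
        ((Complex.ofRealCLM.contDiff.contDiffAt).comp v hnm))
      exact Complex.ofReal_ne_zero.2 hb.ne'
  · -- smoothness of invR
    rintro v ⟨⟨i, hiP, hvi⟩, ⟨j, hjN, hvj⟩⟩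
    refine ContDiffAt.contDiffWithinAt ?_
    have hA : 0 < normPlusSq n k v := by
      refine Finset.sum_pos' (fun l hl => mul_nonneg
        (by exact_mod_cast (Finset.mem_filter.1 hl).2.le) (by positivity)) ?_
      exact ⟨i, Finset.mem_filter.2 ⟨Finset.mem_univ i, hiP⟩,
        mul_pos (by exact_mod_cast hiP) (pow_pos (norm_pos_iff.2 hvi) 2)⟩
    have hB : 0 < normMinusSq n k v := by
      refine Finset.sum_pos' (fun l hl => mul_nonneg ?_ (by positivity)) ?_
      · have h2 : ((k l : ℝ)) < 0 := by exact_mod_cast (Finset.mem_filter.1 hl).2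
        linarith
      refine ⟨j, Finset.mem_filter.2 ⟨Finset.mem_univ j, hjN⟩, ?_⟩
      have h2 : ((k j : ℝ)) < 0 := by exact_mod_cast hjN
      exact mul_pos (by linarith) (pow_pos (norm_pos_iff.2 hvj) 2)
    have hnp : ContDiffAt ℝ (⊤ : ℕ∞) (normPlus n k) v :=
      (Real.contDiffAt_sqrt hA.ne').comp v (contDiff_normPlusSq n k).contDiffAt
    have hnm : ContDiffAt ℝ (⊤ : ℕ∞) (normMinus n k) v :=
      (Real.contDiffAt_sqrt hB.ne').comp v (contDiff_normMinusSq n k).contDiffAt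
    have ha : 0 < normPlus n k v := Real.sqrt_pos.2 hA
    have hb : 0 < normMinus n k v := Real.sqrt_pos.2 hB
    unfold invR
    exact (Real.contDiffAt_sqrt (mul_pos ha hb).ne').comp v (hnp.mul hnm)
  · -- smoothness of invQ
    exact (((contDiff_normPlusSq n k).sub (contDiff_normMinusSq n k)).div_const 2).contDiffOn
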